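/- There exists a constant C > 0 such that for every f ∈ C(K,ℝ) with ℰ(f) < ∞ and all x, y ∈ K, |f(x) − f(y)| ≤ C √(ℰ(f)) · |x − y|^β, where β = log(5/3)/(2 log 2). -/

import Mathlib

open Filter
open scoped ENNReal

noncomputable section

/-- Vertices of the base triangle. -/
def sgv1 : ℝ × ℝ := (0, 0)
def sgv2 : ℝ × ℝ := (1/2, Real.sqrt 3 / 2)
def sgv3 : ℝ × ℝ := (1, 0)

def sgvtx : Fin 3 → ℝ × ℝ
  | 0 => sgv1
  | 1 => sgv2
  | 2 => sgv3

/-- The contraction `F_i(x) = (x - v_i)/2 + v_i = (x + v_i)/2`. -/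
def sgF (i : Fin 3) (x : ℝ × ℝ) : ℝ × ℝ := (1/2 : ℝ) • (x + sgvtx i)

/-- `F_w = F_{w₁} ∘ ⋯ ∘ F_{wₙ}` (empty word gives the identity). -/
def sgFw (w : List (Fin 3)) : ℝ × ℝ → ℝ × ℝ :=
  w.foldr (fun i g => sgF i ∘ g) id

instance : DecidableEq (ℝ × ℝ) := Classical.decEq _

/-- The vertex sets `Vₙ`. -/
def sgV : ℕ → Finset (ℝ × ℝ)
  | 0 => {sgv1, sgv2, sgv3}
  | n + 1 => Finset.univ.biUnion fun i : Fin 3 => (sgV n).image (sgF i)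

/-- Adjacency on `Γₙ`: distinct points lying in a common image `F_w(V₀)`, `|w| = n`. -/
def sgAdj (n : ℕ) (x y : ℝ × ℝ) : Prop :=
  x ≠ y ∧ ∃ w : List (Fin 3), w.length = n ∧
    x ∈ (sgV 0).image (sgFw w) ∧ y ∈ (sgV 0).image (sgFw w)

open Classical in
/-- Discrete Dirichlet energy `ℰₙ` (each undirected edge counted once: we sum
over ordered pairs and halve). -/
def sgE (n : ℕ) (f : ℝ × ℝ → ℝ) : ℝ :=
  (5/3 : ℝ) ^ n * ((1:ℝ)/2) *
    ∑ x ∈ sgV n, ∑ y ∈ sgV n, if sgAdj n x y then (f y - f x) ^ 2 / 2 else 0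

open Classical in
/-- Discrete Kuramoto energy `𝒥ₙ` (each undirected edge counted once). -/
def sgJ (n : ℕ) (f : ℝ × ℝ → ℝ) : ℝ :=
  (5/3 : ℝ) ^ n * (1 / (4 * Real.pi ^ 2)) * ((1:ℝ)/2) *
    ∑ x ∈ sgV n, ∑ y ∈ sgV n,
      if sgAdj n x y then 1 - Real.cos (2 * Real.pi * (f y - f x)) else 0

open Classical in
/-- Discrete Laplacian `Δₘ`. -/
def sgLap (m : ℕ) (f : ℝ × ℝ → ℝ) (x : ℝ × ℝ) : ℝ :=
  (5/3 : ℝ) ^ m * ∑ y ∈ sgV m, if sgAdj m x y then f y - f x else 0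

/-- `ℰ(f) = supₙ ℰₙ(f) ∈ [0,∞]`. -/
def sgEtot (f : ℝ × ℝ → ℝ) : ℝ≥0∞ :=
  ⨆ n : ℕ, ENNReal.ofReal (sgE n f)

/-- The circle `𝕋 = ℝ/ℤ`. -/
abbrev 𝕋c := AddCircle (1 : ℝ)

/-- `HasWinding c k`: the loop `c : [0,1] → 𝕋` admits a continuous lift `ĉ` with
`ĉ(1) - ĉ(0) = k`. -/
def HasWinding (c : ℝ → 𝕋c) (k : ℤ) : Prop :=
  ∃ ch : ℝ → ℝ, ContinuousOn ch (Set.Icc 0 1) ∧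
    (∀ t ∈ Set.Icc (0:ℝ) 1, ((ch t : ℝ) : 𝕋c) = c t) ∧ ch 1 - ch 0 = (k : ℝ)

/-- Constant-speed clockwise parametrization of `∂T` starting at the leftmost
vertex `v₁`, passing through `v₂` and then `v₃`. -/
def sgc0 (t : ℝ) : ℝ × ℝ :=
  if t ≤ 1/3 then sgv1 + (3 * t) • (sgv2 - sgv1)
  else if t ≤ 2/3 then sgv2 + (3 * t - 1) • (sgv3 - sgv2)
  else sgv3 + (3 * t - 2) • (sgv1 - sgv3)

/-- Constant-speed clockwise parametrization of `∂T_w` starting at its leftmost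
vertex `F_w(v₁)`. -/
def sgcw (w : List (Fin 3)) (t : ℝ) : ℝ × ℝ := sgFw w (sgc0 t)


instance : Fact ((0:ℝ) < 1) := ⟨one_pos⟩

/-- `cos(2πθ)` for `θ ∈ 𝕋` (well defined via any representative). -/
def cosT (θ : 𝕋c) : ℝ :=
  Real.cos (2 * Real.pi * ((AddCircle.equivIco 1 0 θ : ℝ)))

open Classical in
/-- The `𝕋`-valued Kuramoto energy `𝒥ₙ` (each undirected edge counted once). -/
def sgJT (n : ℕ) (u : ℝ × ℝ → 𝕋c) : ℝ :=
  (5/3 : ℝ) ^ n * (1 / (4 * Real.pi ^ 2)) * ((1:ℝ)/2) *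
    ∑ x ∈ sgV n, ∑ y ∈ sgV n,
      if sgAdj n x y then 1 - cosT (u y - u x) else 0


/-!
Two scaling facts drive the proof. The energy of `f ∘ F_i` is at most `3/5` of that of `f`, so
`√ℰ` shrinks by `√(3/5) = 2^{-β}` exactly as `dist ^ β` does under `F_i`: a Hölder bound between
two points transfers to their images under `F_i`. Comparing `f` at the vertices `F_w(v₁)` through
adjacent vertices of level one gives the oscillation bound `|f z - f v₁| ≤ 8 √ℰ(f)` on `K`.

For `x ≠ y`, descend to the smallest cell containing both: rescaled, they lie in distinct
cells `F_i K` and `F_j K`, which meet at `F_i v_j` at an angle of at least `60°`, so this junction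
is within twice `dist x y` of each. The bound at a vertex `v_j` comes from the same descent, which
ends at a point of `K` outside `F_j K`, at distance at least `1/12` from `v_j`, where the
oscillation bound suffices.
-/

def sgTriangle : Set (ℝ × ℝ) :=
  {p | 0 ≤ p.2 ∧ p.2 ≤ Real.sqrt 3 * p.1 ∧ p.2 ≤ Real.sqrt 3 * (1 - p.1)}

lemma sq_sqrt_three : Real.sqrt 3 ^ 2 = 3 := Real.sq_sqrt (by norm_num)

lemma sqrt_three_pos : 0 < Real.sqrt 3 := by positivity

lemma sqrt_three_lt_two : Real.sqrt 3 < 2 := by nlinarith [sq_sqrt_three, sqrt_three_pos]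

lemma four_thirds_lt_sqrt_three : (4 / 3 : ℝ) < Real.sqrt 3 := by
  nlinarith [sq_sqrt_three, sqrt_three_pos]

lemma sgF_apply (i : Fin 3) (p : ℝ × ℝ) :
    sgF i p = ((p.1 + (sgvtx i).1) / 2, (p.2 + (sgvtx i).2) / 2) := by
  ext <;> simp only [sgF, Prod.smul_fst, Prod.smul_snd, Prod.fst_add, Prod.snd_add,
    smul_eq_mul] <;> ring

lemma sgF_sgvtx_self (i : Fin 3) : sgF i (sgvtx i) = sgvtx i := by
  rw [sgF, ← two_smul ℝ (sgvtx i), smul_smul]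
  norm_num

lemma sgF_sgvtx_comm (i j : Fin 3) : sgF i (sgvtx j) = sgF j (sgvtx i) := by
  simp only [sgF, add_comm]

lemma sgF_injective (i : Fin 3) : Function.Injective (sgF i) := by
  intro a b h
  simpa [sgF] using h

lemma dist_sgF (i : Fin 3) (a b : ℝ × ℝ) : dist (sgF i a) (sgF i b) = dist a b / 2 := by
  rw [sgF, sgF, dist_smul₀, dist_add_right]
  norm_num
  ring

lemma continuous_sgF (i : Fin 3) : Continuous (sgF i) := by
  unfold sgF; fun_prop

lemma sgF_mem_sgTriangle (i : Fin 3) {p : ℝ × ℝ} (hp : p ∈ sgTriangle) :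
    sgF i p ∈ sgTriangle := by
  obtain ⟨h1, h2, h3⟩ := hp
  fin_cases i <;>
    simp only [sgF_apply, sgvtx, sgv1, sgv2, sgv3, sgTriangle, Set.mem_ofPred_eq] <;>
    exact ⟨by nlinarith [sqrt_three_pos], by nlinarith [sqrt_three_pos],
      by nlinarith [sqrt_three_pos]⟩

lemma sgvtx_mem_sgTriangle (i : Fin 3) : sgvtx i ∈ sgTriangle := by
  have := sqrt_three_pos
  fin_cases i <;> simp only [sgvtx, sgv1, sgv2, sgv3, sgTriangle, Set.mem_ofPred_eq] <;>
    refine ⟨?_, ?_, ?_⟩ <;> linarith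

lemma isClosed_sgTriangle : IsClosed sgTriangle :=
  (isClosed_le continuous_const continuous_snd).inter
    ((isClosed_le continuous_snd (continuous_const.mul continuous_fst)).inter
      (isClosed_le continuous_snd (continuous_const.mul (continuous_const.sub continuous_fst))))

lemma dist_le_one_of_mem_sgTriangle {p q : ℝ × ℝ} (hp : p ∈ sgTriangle) (hq : q ∈ sgTriangle) :
    dist p q ≤ 1 := by
  obtain ⟨hp1, hp2, hp3⟩ := hp
  obtain ⟨hq1, hq2, hq3⟩ := hq
  have := sqrt_three_lt_two
  have := four_thirds_lt_sqrt_three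
  rw [Prod.dist_eq]
  apply max_le <;> rw [Real.dist_eq, abs_le] <;> constructor <;> nlinarith

lemma half_le_dist_sgvtx {i j : Fin 3} (hij : i ≠ j) : 1 / 2 ≤ dist (sgvtx i) (sgvtx j) := by
  fin_cases i <;> fin_cases j <;> simp at hij <;>
    simp only [sgvtx, sgv1, sgv2, sgv3, Prod.dist_eq, Real.dist_eq] <;>
    exact le_max_of_le_left (by norm_num)

lemma mem_sgF_zero_image {p : ℝ × ℝ} (hp : p ∈ sgF 0 '' sgTriangle) :
    0 ≤ p.2 ∧ p.2 ≤ Real.sqrt 3 * p.1 ∧ p.2 ≤ Real.sqrt 3 * (1 / 2 - p.1) := by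
  obtain ⟨t, ⟨h1, h2, h3⟩, rfl⟩ := hp
  simp only [sgF_apply, sgvtx, sgv1]
  exact ⟨by linarith, by linarith, by linarith⟩

lemma mem_sgF_one_image {p : ℝ × ℝ} (hp : p ∈ sgF 1 '' sgTriangle) :
    Real.sqrt 3 / 4 ≤ p.2 ∧ p.2 ≤ Real.sqrt 3 * p.1 ∧ p.2 ≤ Real.sqrt 3 * (1 - p.1) := by
  obtain ⟨t, ⟨h1, h2, h3⟩, rfl⟩ := hp
  simp only [sgF_apply, sgvtx, sgv2]
  exact ⟨by linarith, by linarith, by linarith⟩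

lemma mem_sgF_two_image {p : ℝ × ℝ} (hp : p ∈ sgF 2 '' sgTriangle) :
    0 ≤ p.2 ∧ p.2 ≤ Real.sqrt 3 * (p.1 - 1 / 2) ∧ p.2 ≤ Real.sqrt 3 * (1 - p.1) := by
  obtain ⟨t, ⟨h1, h2, h3⟩, rfl⟩ := hp
  simp only [sgF_apply, sgvtx, sgv3]
  exact ⟨by linarith, by linarith, by linarith⟩

/- With `s = Real.sqrt 3`: the cells of level one meeting at a junction point `m` lie in wedges with
apex `m` at least `60°` apart, whence `|p - m|² ≤ |p - q|² / sin² 60° = 4/3 |p - q|²`. In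
coordinates centred at `m`, `p = (a, b)` with `0 ≤ b ≤ s a`, and `q` is either `(-c, d)` with
`0 ≤ d ≤ s c` or `(-e, -g)` with `s |e| ≤ g`. -/
lemma sq_add_sq_le_of_mirror_wedges {a b c d s : ℝ} (hb : 0 ≤ b) (hd : 0 ≤ d) (hba : b ≤ s * a)
    (hdc : d ≤ s * c) (hs : s ^ 2 = 3) (hs0 : 0 < s) :
    a ^ 2 + b ^ 2 ≤ 4 / 3 * ((a + c) ^ 2 + (b - d) ^ 2) := by
  have ha : 0 ≤ a := nonneg_of_mul_nonneg_right (hb.trans hba) hs0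
  have hc : 0 ≤ c := nonneg_of_mul_nonneg_right (hd.trans hdc) hs0
  nlinarith [sq_nonneg (a - 2 * c), sq_nonneg (b - 2 * d),
    mul_nonneg (sub_nonneg.2 hba) (sub_nonneg.2 hdc), mul_nonneg (sub_nonneg.2 hba) hd,
    mul_nonneg (sub_nonneg.2 hdc) hb, mul_nonneg ha hc, sq_nonneg (s * a - 2 * d),
    sq_nonneg (s * c - b), mul_nonneg hb hd]

lemma sq_add_sq_le_of_opposite_wedges {a b e g s : ℝ} (hb : 0 ≤ b) (hg1 : s * e ≤ g)
    (hg2 : -(s * e) ≤ g) (hs : s ^ 2 = 3) :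
    a ^ 2 + b ^ 2 ≤ 4 / 3 * ((a + e) ^ 2 + (b + g) ^ 2) := by
  have hg : 0 ≤ g := by nlinarith
  nlinarith [sq_nonneg (a / 2 + 2 * e), mul_nonneg (sub_nonneg.2 hg1) (sub_nonneg.2 hg2),
    mul_nonneg hb hg]

lemma sq_add_sq_le_of_opposite_wedges' {a b e g s : ℝ} (hb : 0 ≤ b) (hba : b ≤ s * a)
    (hg1 : s * e ≤ g) (hg2 : -(s * e) ≤ g) (hs : s ^ 2 = 3) (hs0 : 0 < s) :
    e ^ 2 + g ^ 2 ≤ 4 / 3 * ((a + e) ^ 2 + (b + g) ^ 2) := by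
  have ha : 0 ≤ a := nonneg_of_mul_nonneg_right (hb.trans hba) hs0
  have hg : 0 ≤ g := by nlinarith
  nlinarith [sq_nonneg (e + 2 * a), sq_nonneg (g - 2 * b), sq_nonneg (g + 2 * b),
    mul_nonneg (sub_nonneg.2 hba) hg, mul_nonneg (sub_nonneg.2 hg1) hb,
    mul_nonneg (sub_nonneg.2 hg2) hb, mul_nonneg ha hg,
    mul_nonneg (sub_nonneg.2 hba) (sub_nonneg.2 hg1),
    mul_nonneg (sub_nonneg.2 hba) (sub_nonneg.2 hg2), sq_nonneg (s * a - 2 * g),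
    sq_nonneg (s * e + b), sq_nonneg (s * e - b), mul_nonneg hb hg]

/- `dist` on `ℝ × ℝ` is the sup metric; the angle estimates are Euclidean. -/
def sqEuclDist (p q : ℝ × ℝ) : ℝ := (p.1 - q.1) ^ 2 + (p.2 - q.2) ^ 2

lemma sq_dist_le_sqEuclDist (p q : ℝ × ℝ) : dist p q ^ 2 ≤ sqEuclDist p q := by
  rw [Prod.dist_eq, sqEuclDist]
  rcases max_cases (dist p.1 q.1) (dist p.2 q.2) with ⟨h, _⟩ | ⟨h, _⟩ <;>
    rw [h, Real.dist_eq, sq_abs] <;> nlinarith [sq_nonneg (p.1 - q.1), sq_nonneg (p.2 - q.2)]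

lemma sqEuclDist_le_two_mul_sq_dist (p q : ℝ × ℝ) : sqEuclDist p q ≤ 2 * dist p q ^ 2 := by
  have h1 : |p.1 - q.1| ≤ dist p q := by
    rw [Prod.dist_eq, ← Real.dist_eq]; exact le_max_left _ _
  have h2 : |p.2 - q.2| ≤ dist p q := by
    rw [Prod.dist_eq, ← Real.dist_eq]; exact le_max_right _ _
  rw [sqEuclDist, ← sq_abs (p.1 - q.1), ← sq_abs (p.2 - q.2)]
  nlinarith [abs_nonneg (p.1 - q.1), abs_nonneg (p.2 - q.2)]

lemma sqEuclDist_junction_le {i j : Fin 3} (hij : i ≠ j) {p q : ℝ × ℝ}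
    (hp : p ∈ sgF i '' sgTriangle) (hq : q ∈ sgF j '' sgTriangle) :
    sqEuclDist p (sgF i (sgvtx j)) ≤ 4 / 3 * sqEuclDist p q := by
  have hs := sq_sqrt_three
  have hs0 := sqrt_three_pos
  fin_cases i <;> fin_cases j <;> simp at hij <;>
    simp only [sqEuclDist, sgF_apply, sgvtx, sgv1, sgv2, sgv3]
  · obtain ⟨ha1, ha2, ha3⟩ := mem_sgF_zero_image hp
    obtain ⟨hb1, hb2, hb3⟩ := mem_sgF_one_image hq
    linear_combination sq_add_sq_le_of_opposite_wedges' (a := q.1 - 1 / 4)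
      (b := q.2 - Real.sqrt 3 / 4) (e := 1 / 4 - p.1) (g := Real.sqrt 3 / 4 - p.2)
      (by linarith) (by linarith) (by linarith) (by linarith) hs hs0
  · obtain ⟨ha1, ha2, ha3⟩ := mem_sgF_zero_image hp
    obtain ⟨hb1, hb2, hb3⟩ := mem_sgF_two_image hq
    linear_combination sq_add_sq_le_of_mirror_wedges (a := 1 / 2 - p.1) (b := p.2)
      (c := q.1 - 1 / 2) (d := q.2) ha1 hb1 (by linarith) (by linarith) hs hs0
  · obtain ⟨ha1, ha2, ha3⟩ := mem_sgF_one_image hp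
    obtain ⟨hb1, hb2, hb3⟩ := mem_sgF_zero_image hq
    linear_combination sq_add_sq_le_of_opposite_wedges (a := p.1 - 1 / 4)
      (b := p.2 - Real.sqrt 3 / 4) (e := 1 / 4 - q.1) (g := Real.sqrt 3 / 4 - q.2)
      (by linarith) (by linarith) (by linarith) hs
  · obtain ⟨ha1, ha2, ha3⟩ := mem_sgF_one_image hp
    obtain ⟨hb1, hb2, hb3⟩ := mem_sgF_two_image hq
    linear_combination sq_add_sq_le_of_opposite_wedges (a := 3 / 4 - p.1)
      (b := p.2 - Real.sqrt 3 / 4) (e := q.1 - 3 / 4) (g := Real.sqrt 3 / 4 - q.2)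
      (by linarith) (by linarith) (by linarith) hs
  · obtain ⟨ha1, ha2, ha3⟩ := mem_sgF_two_image hp
    obtain ⟨hb1, hb2, hb3⟩ := mem_sgF_zero_image hq
    linear_combination sq_add_sq_le_of_mirror_wedges (a := p.1 - 1 / 2) (b := p.2)
      (c := 1 / 2 - q.1) (d := q.2) ha1 hb1 (by linarith) (by linarith) hs hs0
  · obtain ⟨ha1, ha2, ha3⟩ := mem_sgF_two_image hp
    obtain ⟨hb1, hb2, hb3⟩ := mem_sgF_one_image hq
    linear_combination sq_add_sq_le_of_opposite_wedges' (a := 3 / 4 - q.1)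
      (b := q.2 - Real.sqrt 3 / 4) (e := p.1 - 3 / 4) (g := Real.sqrt 3 / 4 - p.2)
      (by linarith) (by linarith) (by linarith) (by linarith) hs hs0

lemma dist_junction_le {i j : Fin 3} (hij : i ≠ j) {p q : ℝ × ℝ}
    (hp : p ∈ sgF i '' sgTriangle) (hq : q ∈ sgF j '' sgTriangle) :
    dist p (sgF i (sgvtx j)) ≤ 2 * dist p q := by
  have h := (sq_dist_le_sqEuclDist _ _).trans
    ((sqEuclDist_junction_le hij hp hq).trans
      (mul_le_mul_of_nonneg_left (sqEuclDist_le_two_mul_sq_dist p q) (by norm_num)))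
  nlinarith [dist_nonneg (x := p) (y := q), dist_nonneg (x := p) (y := sgF i (sgvtx j))]

lemma one_le_twelve_mul_dist_sgvtx {i j : Fin 3} (hij : i ≠ j) {p : ℝ × ℝ}
    (hp : p ∈ sgF i '' sgTriangle) : 1 ≤ 12 * dist p (sgvtx j) := by
  have hjunction := dist_junction_le hij hp
    ⟨sgvtx j, sgvtx_mem_sgTriangle j, sgF_sgvtx_self j⟩
  have hvtx : 1 / 4 ≤ dist (sgF i (sgvtx j)) (sgvtx j) := by
    have := dist_sgF j (sgvtx i) (sgvtx j)
    rw [sgF_sgvtx_self] at this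
    rw [sgF_sgvtx_comm, this]
    linarith [half_le_dist_sgvtx hij]
  linarith [dist_triangle (sgF i (sgvtx j)) p (sgvtx j), dist_comm p (sgF i (sgvtx j))]

lemma sgFw_cons (i : Fin 3) (w : List (Fin 3)) : sgFw (i :: w) = sgF i ∘ sgFw w := rfl

lemma dist_sgFw (w : List (Fin 3)) (a b : ℝ × ℝ) :
    dist (sgFw w a) (sgFw w b) = dist a b / 2 ^ w.length := by
  induction w with
  | nil => simp [sgFw]
  | cons i w ih =>
    rw [sgFw_cons, Function.comp_apply, Function.comp_apply, dist_sgF, ih, List.length_cons,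
      pow_succ, div_div]

lemma sgFw_mem_sgTriangle (w : List (Fin 3)) {p : ℝ × ℝ} (hp : p ∈ sgTriangle) :
    sgFw w p ∈ sgTriangle := by
  induction w with
  | nil => exact hp
  | cons i w ih => exact sgF_mem_sgTriangle i ih

structure IsSierpinskiGasket (K : Set (ℝ × ℝ)) : Prop where
  nonempty : K.Nonempty
  isCompact : IsCompact K
  eq_iUnion : K = ⋃ i : Fin 3, sgF i '' K

namespace IsSierpinskiGasket

variable {K : Set (ℝ × ℝ)}

lemma mapsTo_sgF (hK : IsSierpinskiGasket K) (i : Fin 3) : Set.MapsTo (sgF i) K K := by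
  intro x hx
  rw [hK.eq_iUnion]
  exact Set.mem_iUnion.2 ⟨i, x, hx, rfl⟩

lemma mapsTo_sgFw (hK : IsSierpinskiGasket K) (w : List (Fin 3)) : Set.MapsTo (sgFw w) K K := by
  induction w with
  | nil => exact Set.mapsTo_id K
  | cons i w ih => exact (hK.mapsTo_sgF i).comp ih

lemma exists_eq_sgF (hK : IsSierpinskiGasket K) {x : ℝ × ℝ} (hx : x ∈ K) :
    ∃ i : Fin 3, ∃ y ∈ K, x = sgF i y := by
  rw [hK.eq_iUnion] at hx
  obtain ⟨i, y, hy, rfl⟩ := Set.mem_iUnion.1 hx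
  exact ⟨i, y, hy, rfl⟩

lemma exists_eq_sgFw (hK : IsSierpinskiGasket K) {x : ℝ × ℝ} (hx : x ∈ K) (n : ℕ) :
    ∃ w : List (Fin 3), w.length = n ∧ ∃ y ∈ K, x = sgFw w y := by
  induction n generalizing x with
  | zero => exact ⟨[], rfl, x, hx, rfl⟩
  | succ n ih =>
    obtain ⟨i, x', hx', rfl⟩ := hK.exists_eq_sgF hx
    obtain ⟨w, hw, y, hy, rfl⟩ := ih hx'
    exact ⟨i :: w, by rw [List.length_cons, hw], y, hy, rfl⟩

lemma subset_closure_range_sgFw (hK : IsSierpinskiGasket K) (p : ℝ × ℝ) :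
    K ⊆ closure (Set.range fun w => sgFw w p) := by
  intro x hx
  obtain ⟨D, hD⟩ := (Metric.isBounded_iff_subset_closedBall p).1 hK.isCompact.isBounded
  rw [Metric.mem_closure_iff]
  intro ε hε
  obtain ⟨n, hn⟩ := pow_unbounded_of_one_lt (D / ε) one_lt_two
  obtain ⟨w, rfl, y, hy, rfl⟩ := hK.exists_eq_sgFw hx n
  refine ⟨_, ⟨w, rfl⟩, ?_⟩
  rw [dist_sgFw, div_lt_iff₀ (by positivity)]
  rw [div_lt_iff₀ hε] at hn
  nlinarith [Metric.mem_closedBall.1 (hD hy)]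

lemma subset_sgTriangle (hK : IsSierpinskiGasket K) : K ⊆ sgTriangle :=
  (hK.subset_closure_range_sgFw sgv1).trans <| closure_minimal
    (Set.range_subset_iff.2 fun w => sgFw_mem_sgTriangle w (sgvtx_mem_sgTriangle 0))
    isClosed_sgTriangle

lemma dist_le_one (hK : IsSierpinskiGasket K) {x y : ℝ × ℝ} (hx : x ∈ K) (hy : y ∈ K) :
    dist x y ≤ 1 :=
  dist_le_one_of_mem_sgTriangle (hK.subset_sgTriangle hx) (hK.subset_sgTriangle hy)

lemma sgvtx_mem (hK : IsSierpinskiGasket K) (i : Fin 3) : sgvtx i ∈ K := by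
  have hc : ContractingWith (1 / 2) (sgF i) :=
    ⟨by norm_num, LipschitzWith.of_dist_le_mul fun a b => by rw [dist_sgF]; norm_num; linarith⟩
  obtain ⟨x, hx⟩ := hK.nonempty
  rw [hc.fixedPoint_unique (sgF_sgvtx_self i)]
  exact hK.isCompact.isClosed.mem_of_tendsto (hc.tendsto_iterate_fixedPoint x)
    (Eventually.of_forall fun n => (hK.mapsTo_sgF i).iterate n hx)

end IsSierpinskiGasket

lemma sgE_nonneg (n : ℕ) (f : ℝ × ℝ → ℝ) : 0 ≤ sgE n f := by
  unfold sgE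
  refine mul_nonneg (by positivity) (Finset.sum_nonneg fun x _ => Finset.sum_nonneg fun y _ => ?_)
  split_ifs <;> positivity

lemma sgE_le_toReal_sgEtot {f : ℝ × ℝ → ℝ} (hf : sgEtot f < ⊤) (n : ℕ) :
    sgE n f ≤ (sgEtot f).toReal := by
  have h := ENNReal.toReal_mono hf.ne (le_iSup (fun n => ENNReal.ofReal (sgE n f)) n)
  rwa [ENNReal.toReal_ofReal (sgE_nonneg n f)] at h

lemma mem_sgV_of_mem_image_sgFw {w : List (Fin 3)} {x : ℝ × ℝ}
    (hx : x ∈ (sgV 0).image (sgFw w)) : x ∈ sgV w.length := by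
  induction w generalizing x with
  | nil => simpa [sgFw] using hx
  | cons i w ih =>
    obtain ⟨a, ha, rfl⟩ := Finset.mem_image.1 hx
    exact Finset.mem_biUnion.2 ⟨i, Finset.mem_univ i,
      Finset.mem_image.2 ⟨_, ih (Finset.mem_image.2 ⟨a, ha, rfl⟩), rfl⟩⟩

open Classical in
lemma sq_sub_le_sgE_of_sgAdj (f : ℝ × ℝ → ℝ) {n : ℕ} {x y : ℝ × ℝ} (h : sgAdj n x y) :
    (5 / 3) ^ n * (f y - f x) ^ 2 / 4 ≤ sgE n f := by
  obtain ⟨hne, w, rfl, hx, hy⟩ := h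
  have hterm_nonneg : ∀ a b, 0 ≤ if sgAdj w.length a b then (f b - f a) ^ 2 / 2 else 0 := by
    intro a b; split_ifs <;> positivity
  have hsingle : (f y - f x) ^ 2 / 2 ≤ ∑ a ∈ sgV w.length, ∑ b ∈ sgV w.length,
      if sgAdj w.length a b then (f b - f a) ^ 2 / 2 else 0 := by
    refine le_trans ?_ (Finset.single_le_sum (fun a _ => Finset.sum_nonneg fun b _ =>
      hterm_nonneg a b) (mem_sgV_of_mem_image_sgFw hx))
    refine le_trans ?_ (Finset.single_le_sum (fun b _ => hterm_nonneg x b)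
      (mem_sgV_of_mem_image_sgFw hy))
    rw [if_pos ⟨hne, w, rfl, hx, hy⟩]
  unfold sgE
  calc (5 / 3 : ℝ) ^ w.length * (f y - f x) ^ 2 / 4
      = (5 / 3) ^ w.length * (1 / 2) * ((f y - f x) ^ 2 / 2) := by ring
    _ ≤ _ := by gcongr

lemma sgF_mem_sgV {n : ℕ} {x : ℝ × ℝ} (hx : x ∈ sgV n) (i : Fin 3) : sgF i x ∈ sgV (n + 1) :=
  Finset.mem_biUnion.2 ⟨i, Finset.mem_univ i, Finset.mem_image.2 ⟨x, hx, rfl⟩⟩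

lemma sgAdj.map_sgF {n : ℕ} {x y : ℝ × ℝ} (h : sgAdj n x y) (i : Fin 3) :
    sgAdj (n + 1) (sgF i x) (sgF i y) := by
  obtain ⟨hne, w, rfl, hx, hy⟩ := h
  obtain ⟨a, ha, rfl⟩ := Finset.mem_image.1 hx
  obtain ⟨b, hb, rfl⟩ := Finset.mem_image.1 hy
  exact ⟨fun h => hne (sgF_injective i h), i :: w, rfl, Finset.mem_image.2 ⟨a, ha, rfl⟩,
    Finset.mem_image.2 ⟨b, hb, rfl⟩⟩

open Classical in
lemma sgE_comp_sgF_le (f : ℝ × ℝ → ℝ) (i : Fin 3) (n : ℕ) :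
    sgE n (f ∘ sgF i) ≤ 3 / 5 * sgE (n + 1) f := by
  set term : ℕ → ℝ × ℝ → ℝ × ℝ → ℝ := fun m x y =>
    if sgAdj m x y then (f y - f x) ^ 2 / 2 else 0 with hterm
  have hterm_nonneg : ∀ m x y, 0 ≤ term m x y := fun m x y => by
    simp only [hterm]; split_ifs <;> positivity
  have hinj : Set.InjOn (sgF i) (sgV n) := (sgF_injective i).injOn
  have hsub : (sgV n).image (sgF i) ⊆ sgV (n + 1) := fun x hx => by
    obtain ⟨a, ha, rfl⟩ := Finset.mem_image.1 hx
    exact sgF_mem_sgV ha i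
  have hsum : (∑ x ∈ sgV n, ∑ y ∈ sgV n,
        if sgAdj n x y then ((f ∘ sgF i) y - (f ∘ sgF i) x) ^ 2 / 2 else 0) ≤
      ∑ x ∈ sgV (n + 1), ∑ y ∈ sgV (n + 1), term (n + 1) x y :=
    calc _ ≤ ∑ x ∈ sgV n, ∑ y ∈ sgV n, term (n + 1) (sgF i x) (sgF i y) := by
          refine Finset.sum_le_sum fun x _ => Finset.sum_le_sum fun y _ => ?_
          by_cases h : sgAdj n x y
          · simp only [hterm, if_pos h, if_pos (h.map_sgF i), Function.comp_apply, le_refl]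
          · rw [if_neg h]; exact hterm_nonneg _ _ _
      _ = ∑ x ∈ (sgV n).image (sgF i), ∑ y ∈ (sgV n).image (sgF i), term (n + 1) x y := by
          rw [Finset.sum_image hinj]
          exact Finset.sum_congr rfl fun x _ => (Finset.sum_image hinj).symm
      _ ≤ _ := by
          refine (Finset.sum_le_sum fun x _ => Finset.sum_le_sum_of_subset_of_nonneg hsub
            fun y _ _ => hterm_nonneg _ _ _).trans ?_
          exact Finset.sum_le_sum_of_subset_of_nonneg hsub fun x _ _ =>
            Finset.sum_nonneg fun y _ => hterm_nonneg _ _ _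
  have h := mul_le_mul_of_nonneg_left hsum (by positivity : (0 : ℝ) ≤ (5 / 3) ^ n * (1 / 2))
  unfold sgE
  rw [pow_succ]
  linarith

lemma sgEtot_comp_sgF_le (f : ℝ × ℝ → ℝ) (i : Fin 3) :
    sgEtot (f ∘ sgF i) ≤ ENNReal.ofReal (3 / 5) * sgEtot f := by
  refine iSup_le fun n => ?_
  calc ENNReal.ofReal (sgE n (f ∘ sgF i)) ≤ ENNReal.ofReal (3 / 5 * sgE (n + 1) f) :=
        ENNReal.ofReal_le_ofReal (sgE_comp_sgF_le f i n)
    _ = ENNReal.ofReal (3 / 5) * ENNReal.ofReal (sgE (n + 1) f) :=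
        ENNReal.ofReal_mul (by norm_num)
    _ ≤ ENNReal.ofReal (3 / 5) * sgEtot f := by
        gcongr; exact le_iSup (fun n => ENNReal.ofReal (sgE n f)) (n + 1)

lemma sgEtot_comp_sgF_lt_top {f : ℝ × ℝ → ℝ} (hf : sgEtot f < ⊤) (i : Fin 3) :
    sgEtot (f ∘ sgF i) < ⊤ :=
  (sgEtot_comp_sgF_le f i).trans_lt (ENNReal.mul_lt_top ENNReal.ofReal_lt_top hf)

lemma sqrt_sgEtot_comp_sgF_le {f : ℝ × ℝ → ℝ} (hf : sgEtot f < ⊤) (i : Fin 3) :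
    Real.sqrt (sgEtot (f ∘ sgF i)).toReal ≤ Real.sqrt (3 / 5) * Real.sqrt (sgEtot f).toReal := by
  rw [← Real.sqrt_mul (by norm_num)]
  refine Real.sqrt_le_sqrt ?_
  have h := ENNReal.toReal_mono (ENNReal.mul_lt_top ENNReal.ofReal_lt_top hf).ne
    (sgEtot_comp_sgF_le f i)
  rwa [ENNReal.toReal_mul, ENNReal.toReal_ofReal (by norm_num)] at h

lemma abs_sub_sgF_sgv1_le {f : ℝ × ℝ → ℝ} (hf : sgEtot f < ⊤) (i : Fin 3) :
    |f (sgF i sgv1) - f sgv1| ≤ 2 * Real.sqrt (3 / 5) * Real.sqrt (sgEtot f).toReal := by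
  by_cases hne : sgv1 = sgF i sgv1
  · rw [← hne, sub_self, abs_zero]; positivity
  have hadj : sgAdj 1 sgv1 (sgF i sgv1) :=
    ⟨hne, [0], rfl, Finset.mem_image.2 ⟨sgv1, by simp [sgV], sgF_sgvtx_self 0⟩,
      Finset.mem_image.2 ⟨sgvtx i, by fin_cases i <;> simp [sgV, sgvtx], sgF_sgvtx_comm 0 i⟩⟩
  have hsq := (sq_sub_le_sgE_of_sgAdj f hadj).trans (sgE_le_toReal_sgEtot hf 1)
  refine abs_le_of_sq_le_sq ?_ (by positivity)
  rw [mul_pow, mul_pow, Real.sq_sqrt (by norm_num), Real.sq_sqrt ENNReal.toReal_nonneg]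
  linarith

/- The bound `8` reproduces itself along the recursion `F_{i w} = F_i ∘ F_w`, because
`8 r + 2 r ≤ 8` for the energy factor `r = √(3/5) ≤ 4/5`. -/
lemma abs_sub_sgFw_sgv1_le (w : List (Fin 3)) {f : ℝ × ℝ → ℝ} (hf : sgEtot f < ⊤) :
    |f (sgFw w sgv1) - f sgv1| ≤ 8 * Real.sqrt (sgEtot f).toReal := by
  induction w generalizing f with
  | nil => simp only [sgFw, List.foldr_nil, id, sub_self, abs_zero]; positivity
  | cons i w ih =>
    have hr : Real.sqrt (3 / 5) ≤ 4 / 5 := Real.sqrt_le_iff.2 ⟨by norm_num, by norm_num⟩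
    have hE : 0 ≤ Real.sqrt (sgEtot f).toReal := Real.sqrt_nonneg _
    calc |f (sgF i (sgFw w sgv1)) - f sgv1|
        ≤ |(f ∘ sgF i) (sgFw w sgv1) - (f ∘ sgF i) sgv1| + |f (sgF i sgv1) - f sgv1| :=
          abs_sub_le _ _ _
      _ ≤ 8 * Real.sqrt (sgEtot (f ∘ sgF i)).toReal
            + 2 * Real.sqrt (3 / 5) * Real.sqrt (sgEtot f).toReal :=
          add_le_add (ih (sgEtot_comp_sgF_lt_top hf i)) (abs_sub_sgF_sgv1_le hf i)
      _ ≤ 8 * (Real.sqrt (3 / 5) * Real.sqrt (sgEtot f).toReal)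
            + 2 * Real.sqrt (3 / 5) * Real.sqrt (sgEtot f).toReal := by
          gcongr; exact sqrt_sgEtot_comp_sgF_le hf i
      _ ≤ 8 * Real.sqrt (sgEtot f).toReal := by nlinarith

namespace IsSierpinskiGasket

variable {K : Set (ℝ × ℝ)}

lemma abs_sub_sgv1_le (hK : IsSierpinskiGasket K) {f : ℝ × ℝ → ℝ} (hf : ContinuousOn f K)
    (hE : sgEtot f < ⊤) {z : ℝ × ℝ} (hz : z ∈ K) :
    |f z - f sgv1| ≤ 8 * Real.sqrt (sgEtot f).toReal := by
  have hrange : Set.range (fun w => sgFw w sgv1) ⊆ K :=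
    Set.range_subset_iff.2 fun w => hK.mapsTo_sgFw w (hK.sgvtx_mem 0)
  have h := ((hf z hz).mono hrange).mem_closure (hK.subset_closure_range_sgFw sgv1 hz)
    (t := Metric.closedBall (f sgv1) (8 * Real.sqrt (sgEtot f).toReal)) (by
      rintro _ ⟨w, rfl⟩
      rw [Metric.mem_closedBall, Real.dist_eq]
      exact abs_sub_sgFw_sgv1_le w hE)
  rwa [Metric.isClosed_closedBall.closure_eq, Metric.mem_closedBall, Real.dist_eq] at h

lemma abs_sub_le_of_mem (hK : IsSierpinskiGasket K) {f : ℝ × ℝ → ℝ} (hf : ContinuousOn f K)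
    (hE : sgEtot f < ⊤) {x y : ℝ × ℝ} (hx : x ∈ K) (hy : y ∈ K) :
    |f x - f y| ≤ 16 * Real.sqrt (sgEtot f).toReal := by
  have := abs_sub_le (f x) (f sgv1) (f y)
  rw [abs_sub_comm (f sgv1)] at this
  linarith [hK.abs_sub_sgv1_le hf hE hx, hK.abs_sub_sgv1_le hf hE hy]

end IsSierpinskiGasket

def sgβ : ℝ := Real.log (5 / 3) / (2 * Real.log 2)

lemma sgβ_pos : 0 < sgβ := div_pos (Real.log_pos (by norm_num)) (by positivity)

lemma sqrt_three_fifths_mul_two_rpow_sgβ : Real.sqrt (3 / 5) * 2 ^ sgβ = 1 := by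
  have h2 : (2 : ℝ) ^ sgβ = Real.sqrt (5 / 3) := by
    rw [Real.sqrt_eq_rpow, Real.rpow_def_of_pos two_pos, Real.rpow_def_of_pos (by norm_num), sgβ]
    congr 1
    field_simp
  rw [h2, ← Real.sqrt_mul (by norm_num)]
  norm_num

def EnergyHolderAt (K : Set (ℝ × ℝ)) (C : ℝ) (x y : ℝ × ℝ) : Prop :=
  ∀ f : ℝ × ℝ → ℝ, ContinuousOn f K → sgEtot f < ⊤ →
    |f x - f y| ≤ C * Real.sqrt (sgEtot f).toReal * dist x y ^ sgβ

namespace EnergyHolderAt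

variable {K : Set (ℝ × ℝ)} {C : ℝ} {x y : ℝ × ℝ}

lemma refl (K : Set (ℝ × ℝ)) (C : ℝ) (x : ℝ × ℝ) : EnergyHolderAt K C x x := by
  intro f _ _
  rw [sub_self, abs_zero, dist_self, Real.zero_rpow sgβ_pos.ne', mul_zero]

lemma map_sgF {i : Fin 3} (hK : Set.MapsTo (sgF i) K K) (hC : 0 ≤ C) (h : EnergyHolderAt K C x y) :
    EnergyHolderAt K C (sgF i x) (sgF i y) := by
  intro f hf hE
  have hdist : dist x y = 2 * dist (sgF i x) (sgF i y) := by rw [dist_sgF]; ring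
  calc |f (sgF i x) - f (sgF i y)|
      ≤ C * Real.sqrt (sgEtot (f ∘ sgF i)).toReal * dist x y ^ sgβ :=
        h (f ∘ sgF i) (hf.comp (continuous_sgF i).continuousOn hK) (sgEtot_comp_sgF_lt_top hE i)
    _ ≤ C * (Real.sqrt (3 / 5) * Real.sqrt (sgEtot f).toReal) * dist x y ^ sgβ := by
        gcongr; exact sqrt_sgEtot_comp_sgF_le hE i
    _ = C * Real.sqrt (sgEtot f).toReal * dist (sgF i x) (sgF i y) ^ sgβ *
          (Real.sqrt (3 / 5) * 2 ^ sgβ) := by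
        rw [hdist, Real.mul_rpow zero_le_two dist_nonneg]; ring
    _ = _ := by rw [sqrt_three_fifths_mul_two_rpow_sgβ, mul_one]

lemma of_junction {m : ℝ × ℝ} {a : ℝ} (ha : 0 ≤ a) (hC : 0 ≤ C) (hx : EnergyHolderAt K C x m)
    (hy : EnergyHolderAt K C y m) (hxm : dist x m ≤ a * dist x y)
    (hym : dist y m ≤ a * dist x y) : EnergyHolderAt K (2 * a ^ sgβ * C) x y := by
  intro f hf hE
  have hβ := sgβ_pos.le
  calc |f x - f y| ≤ |f x - f m| + |f y - f m| := by
        rw [abs_sub_comm (f y)]; exact abs_sub_le _ _ _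
    _ ≤ C * Real.sqrt (sgEtot f).toReal * dist x m ^ sgβ
          + C * Real.sqrt (sgEtot f).toReal * dist y m ^ sgβ :=
        add_le_add (hx f hf hE) (hy f hf hE)
    _ ≤ C * Real.sqrt (sgEtot f).toReal * (a * dist x y) ^ sgβ
          + C * Real.sqrt (sgEtot f).toReal * (a * dist x y) ^ sgβ := by gcongr
    _ = 2 * a ^ sgβ * C * Real.sqrt (sgEtot f).toReal * dist x y ^ sgβ := by
        rw [Real.mul_rpow ha dist_nonneg]; ring

end EnergyHolderAt

lemma pair_induction_of_expand {X : Type*} [MetricSpace X] {S : Set X} {D c : ℝ} (hc : 1 < c)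
    (hD : ∀ x ∈ S, ∀ y ∈ S, dist x y ≤ D) {P : X → X → Prop}
    (h : ∀ x ∈ S, ∀ y ∈ S, x ≠ y →
      P x y ∨ ∃ x' ∈ S, ∃ y' ∈ S, c * dist x y ≤ dist x' y' ∧ (P x' y' → P x y)) :
    ∀ x ∈ S, ∀ y ∈ S, x ≠ y → P x y := by
  have hscale : ∀ n : ℕ, ∀ x ∈ S, ∀ y ∈ S, D < c ^ n * dist x y → P x y := by
    intro n
    induction n with
    | zero =>
      intro x hx y hy hlt
      rw [pow_zero, one_mul] at hlt
      exact absurd (hD x hx y hy) hlt.not_ge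
    | succ n ih =>
      intro x hx y hy hlt
      have hpos : 0 < dist x y := by
        by_contra! h0
        have := hD x hx x hx
        rw [dist_self] at this
        nlinarith [dist_nonneg (x := x) (y := y), pow_pos (zero_lt_one.trans hc) (n + 1)]
      rcases h x hx y hy (dist_pos.1 hpos) with hP | ⟨x', hx', y', hy', hexp, himp⟩
      · exact hP
      · refine himp (ih x' hx' y' hy' (hlt.trans_le ?_))
        rw [pow_succ, mul_assoc]
        exact mul_le_mul_of_nonneg_left hexp (by positivity)
  intro x hx y hy hxy
  obtain ⟨n, hn⟩ := pow_unbounded_of_one_lt (D / dist x y) hc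
  exact hscale n x hx y hy (by rwa [div_lt_iff₀ (dist_pos.2 hxy)] at hn)

namespace IsSierpinskiGasket

variable {K : Set (ℝ × ℝ)}

lemma energyHolderAt_of_one_le_mul_dist (hK : IsSierpinskiGasket K) {a : ℝ} (ha : 0 ≤ a)
    {x y : ℝ × ℝ} (hx : x ∈ K) (hy : y ∈ K) (hxy : 1 ≤ a * dist x y) :
    EnergyHolderAt K (16 * a ^ sgβ) x y := by
  intro f hf hE
  calc |f x - f y| ≤ 16 * Real.sqrt (sgEtot f).toReal := hK.abs_sub_le_of_mem hf hE hx hy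
    _ ≤ 16 * Real.sqrt (sgEtot f).toReal * (a * dist x y) ^ sgβ :=
        le_mul_of_one_le_right (by positivity) (Real.one_le_rpow hxy sgβ_pos.le)
    _ = _ := by rw [Real.mul_rpow ha dist_nonneg]; ring

lemma energyHolderAt_sgvtx (hK : IsSierpinskiGasket K) (j : Fin 3) {z : ℝ × ℝ} (hz : z ∈ K) :
    EnergyHolderAt K (16 * 12 ^ sgβ) z (sgvtx j) := by
  by_cases hzj : z = sgvtx j
  · rw [hzj]; exact EnergyHolderAt.refl _ _ _
  refine pair_induction_of_expand one_lt_two (fun x hx y hy => hK.dist_le_one hx hy)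
    (P := fun x y => y = sgvtx j → EnergyHolderAt K (16 * 12 ^ sgβ) x y) ?_
    z hz _ (hK.sgvtx_mem j) hzj rfl
  intro x hx y hy _
  rcases eq_or_ne y (sgvtx j) with rfl | hyj
  swap
  · exact Or.inl fun h => absurd h hyj
  obtain ⟨i, x', hx', rfl⟩ := hK.exists_eq_sgF hx
  rcases eq_or_ne i j with rfl | hij
  · refine Or.inr ⟨x', hx', sgvtx i, hK.sgvtx_mem i, ?_, fun h _ => ?_⟩
    · conv_lhs => rw [← sgF_sgvtx_self i, dist_sgF]
      linarith
    · simpa only [sgF_sgvtx_self] using (h rfl).map_sgF (hK.mapsTo_sgF i) (by positivity)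
  · exact Or.inl fun _ => hK.energyHolderAt_of_one_le_mul_dist (by norm_num) hx
      (hK.sgvtx_mem j) (one_le_twelve_mul_dist_sgvtx hij ⟨x', hK.subset_sgTriangle hx', rfl⟩)

lemma energyHolderAt (hK : IsSierpinskiGasket K) {x y : ℝ × ℝ} (hx : x ∈ K) (hy : y ∈ K) :
    EnergyHolderAt K (2 * 2 ^ sgβ * (16 * 12 ^ sgβ)) x y := by
  by_cases hxy : x = y
  · rw [hxy]; exact EnergyHolderAt.refl _ _ _
  refine pair_induction_of_expand one_lt_two (fun x hx y hy => hK.dist_le_one hx hy) ?_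
    x hx y hy hxy
  intro x hx y hy _
  obtain ⟨i, x', hx', rfl⟩ := hK.exists_eq_sgF hx
  obtain ⟨j, y', hy', rfl⟩ := hK.exists_eq_sgF hy
  rcases eq_or_ne i j with rfl | hij
  · exact Or.inr ⟨x', hx', y', hy', by rw [dist_sgF]; linarith,
      fun h => h.map_sgF (hK.mapsTo_sgF i) (by positivity)⟩
  have hpx : sgF i x' ∈ sgF i '' sgTriangle := ⟨x', hK.subset_sgTriangle hx', rfl⟩
  have hpy : sgF j y' ∈ sgF j '' sgTriangle := ⟨y', hK.subset_sgTriangle hy', rfl⟩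
  refine Or.inl (EnergyHolderAt.of_junction zero_le_two (by positivity)
    ((hK.energyHolderAt_sgvtx j hx').map_sgF (hK.mapsTo_sgF i) (by positivity)) ?_
    (dist_junction_le hij hpx hpy) ?_)
  · rw [sgF_sgvtx_comm]
    exact (hK.energyHolderAt_sgvtx i hy').map_sgF (hK.mapsTo_sgF j) (by positivity)
  · rw [sgF_sgvtx_comm, dist_comm (sgF i x')]
    exact dist_junction_le (Ne.symm hij) hpy hpx

end IsSierpinskiGasket

/-- a priori Hölder estimate, Lemma 2.2. There is `C > 0` such
that every `f ∈ C(K,ℝ)` of finite Dirichlet energy is `β`-Hölder with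
`β = log(5/3)/(2 log 2)` and constant `C √(ℰ(f))`. -/
theorem statement7
    (K : Set (ℝ × ℝ)) (hKne : K.Nonempty) (hKcpt : IsCompact K)
    (hKfix : K = ⋃ i : Fin 3, sgF i '' K) :
    ∃ C > (0:ℝ), ∀ f : ℝ × ℝ → ℝ, ContinuousOn f K → sgEtot f < ⊤ →
      ∀ x ∈ K, ∀ y ∈ K,
        |f x - f y| ≤
          C * Real.sqrt (sgEtot f).toReal *
            dist x y ^ (Real.log (5/3) / (2 * Real.log 2)) := by
  have hK : IsSierpinskiGasket K := ⟨hKne, hKcpt, hKfix⟩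
  exact ⟨_, by positivity, fun f hf hE x hx y hy => hK.energyHolderAt hx hy f hf hE⟩


end
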